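/- Let H be a Hopf algebra with modular pair in involution (δ, 1), meaning δ is a character with S_δ² = id where S_δ(h) = Σ δ(h₍₁₎)S(h₂₎). Then the cyclic operator on H⊗H given by τ₂(h¹ ⊗ h²) = S_δ(h¹)·(h² ⊗ 1) = Σ S_δ(h¹)₍₁₎h² ⊗ S_δ(h¹)₍₂₎ satisfies τ₂³ = id on H ⊗ H. -/

import Mathlib

open TensorProduct

/-- The `δ`-twisted antipode `S_δ(h) = Σ δ(h₍₁₎) S(h₍₂₎)`. -/
noncomputable def twistedAntipode {k H : Type*} [Field k] [Ring H] [HopfAlgebra k H]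
    (δ : H →ₐ[k] k) : H →ₗ[k] H :=
  (TensorProduct.lid k H).toLinearMap ∘ₗ
    TensorProduct.map δ.toLinearMap (HopfAlgebra.antipode (R := k)) ∘ₗ Coalgebra.comul

/-- The cyclic operator `τ₂(h¹ ⊗ h²) = S_δ(h¹)·(h² ⊗ 1)`, where `H` acts diagonally
on `H ⊗ H` via the coproduct: `h·(a⊗b) = Σ h₍₁₎a ⊗ h₍₂₎b`, i.e. by left
multiplication by `Δ(h)` in the algebra `H ⊗ H`. -/
noncomputable def cyclicTau2 {k H : Type*} [Field k] [Ring H] [HopfAlgebra k H]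
    (δ : H →ₐ[k] k) : H ⊗[k] H →ₗ[k] H ⊗[k] H :=
  TensorProduct.lift
    (((LinearMap.mul k (H ⊗[k] H)).comp
        (Coalgebra.comul ∘ₗ twistedAntipode δ)).compl₂
      ((TensorProduct.mk k H H).flip 1))


/-!
In the convolution algebra `Hom(H, H ⊗ H)`, `Δ` has the right inverse `Δ ∘ S` and the left
inverse `(S ⊗ S) ∘ flip ∘ Δ`, so `Δ ∘ S = (S ⊗ S) ∘ flip ∘ Δ`; since `Δ` is multiplicative and
`S_δ = δ ⋆ S`, also `Δ ∘ S_δ = (S ⊗ S_δ) ∘ flip ∘ Δ`. Hence `τ₂(a ⊗ b) = Σ S(a₍₂₎) b ⊗ S_δ(a₍₁₎)`,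
and everything reduces to the identity `Σ Δ(S_δ S a₍₂₎) · (S_δ a₍₁₎ ⊗ 1) = 1 ⊗ a`. For it, write
`S_δ = S ∘ θ` with the algebra map `θ(a) = Σ δ(a₍₁₎) a₍₂₎`; then the left-hand side is
`(S ⊗ S_δ S)(Σ θ(a₍₁₎) S(a₍₂₎) ⊗ a₍₃₎)`, the convolution identity `θ ⋆ S = δ` collapses the inner
sum to `1 ⊗ θ(a)`, and `S_δ S θ = S_δ² = id`. With it, `τ₂²(a ⊗ b) = Δ(S_δ b) · (1 ⊗ a)`, and one
more application of `τ₂` returns `a ⊗ b`.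
-/

open TensorProduct Coalgebra HopfAlgebra WithConv
open Algebra.TensorProduct (includeLeft includeRight)

namespace LinearMap

section Convolution

variable {R C A B : Type*} [CommSemiring R] [AddCommMonoid C] [Module R C] [Coalgebra R C]
  [Semiring A] [Algebra R A] [Semiring B] [Algebra R B]

lemma includeLeft_comp_convMul_includeRight_comp (f : C →ₗ[R] A) (g : C →ₗ[R] B) :
    toConv ((includeLeft : A →ₐ[R] A ⊗[R] B).toLinearMap ∘ₗ f) *
      toConv ((includeRight : B →ₐ[R] A ⊗[R] B).toLinearMap ∘ₗ g) =
      toConv (map f g ∘ₗ comul) := by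
  ext c
  simp [(ℛ R c).convMul_apply, ← (ℛ R c).eq, Algebra.TensorProduct.tmul_mul_tmul]

lemma includeRight_comp_convMul_includeLeft_comp (f : C →ₗ[R] A) (g : C →ₗ[R] B) :
    toConv ((includeRight : B →ₐ[R] A ⊗[R] B).toLinearMap ∘ₗ g) *
      toConv ((includeLeft : A →ₐ[R] A ⊗[R] B).toLinearMap ∘ₗ f) =
      toConv (map f g ∘ₗ (TensorProduct.comm R C C).toLinearMap ∘ₗ comul) := by
  ext c
  simp [(ℛ R c).convMul_apply, ← (ℛ R c).eq, Algebra.TensorProduct.tmul_mul_tmul]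

lemma algHom_comp_convMul (h : A →ₐ[R] B) (f g : C →ₗ[R] A) :
    toConv (h.toLinearMap ∘ₗ f) * toConv (h.toLinearMap ∘ₗ g) =
      toConv (h.toLinearMap ∘ₗ (toConv f * toConv g).ofConv) :=
  congrArg toConv (algHom_comp_convMul_distrib h (toConv f) (toConv g)).symm

lemma lid_comp_map_comp_comul (φ : C →ₗ[R] R) (f : C →ₗ[R] A) :
    (TensorProduct.lid R A).toLinearMap ∘ₗ map φ f ∘ₗ comul =
      (toConv (Algebra.linearMap R A ∘ₗ φ) * toConv f).ofConv := by
  ext c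
  simp [(ℛ R c).convMul_apply, ← (ℛ R c).eq, Algebra.smul_def]

end Convolution

lemma algHom_comp_algebraLinearMap_comp {R M A B : Type*} [CommSemiring R] [AddCommMonoid M]
    [Module R M] [Semiring A] [Algebra R A] [Semiring B] [Algebra R B]
    (h : A →ₐ[R] B) (φ : M →ₗ[R] R) :
    h.toLinearMap ∘ₗ Algebra.linearMap R A ∘ₗ φ = Algebra.linearMap R B ∘ₗ φ := by
  ext; simp

end LinearMap

namespace HopfAlgebra

variable {R A : Type*} [CommSemiring R] [Semiring A] [HopfAlgebra R A]

theorem comul_comp_antipode :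
    comul ∘ₗ antipode R = map (antipode R) (antipode R) ∘ₗ
      (TensorProduct.comm R A A).toLinearMap ∘ₗ comul := by
  have hL := LinearMap.algHom_comp_convMul (C := A) (includeLeft : A →ₐ[R] A ⊗[R] A)
    (antipode R) .id
  have hR := LinearMap.algHom_comp_convMul (C := A) (includeRight : A →ₐ[R] A ⊗[R] A)
    (antipode R) .id
  rw [LinearMap.antipode_mul_id, LinearMap.algHom_comp_convOne, toConv_ofConv] at hL hR
  have hΔ : toConv (includeLeft.toLinearMap ∘ₗ .id) * toConv (includeRight.toLinearMap ∘ₗ .id) =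
      toConv (comul (R := R) (A := A)) := by
    rw [LinearMap.includeLeft_comp_convMul_includeRight_comp, map_id, LinearMap.id_comp]
  have hleft : toConv (map (antipode R) (antipode R) ∘ₗ
      (TensorProduct.comm R A A).toLinearMap ∘ₗ comul) * toConv comul = 1 := by
    rw [← LinearMap.includeRight_comp_convMul_includeLeft_comp, ← hΔ, mul_assoc,
      ← mul_assoc (toConv (includeLeft.toLinearMap ∘ₗ _)), hL, one_mul, hR]
  exact toConv_injective (left_inv_eq_right_inv hleft LinearMap.comul_right_inv).symm

theorem comul_antipode (a : A) :
    comul (antipode R a) =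
      map (antipode R) (antipode R) (TensorProduct.comm R A A (comul a)) := by
  simpa using LinearMap.congr_fun comul_comp_antipode a

end HopfAlgebra

section TwistedAntipode

variable {k H : Type*} [Field k] [Ring H] [HopfAlgebra k H] (δ : H →ₐ[k] k)

noncomputable def twistAlgHom : H →ₐ[k] H :=
  (Algebra.TensorProduct.lid k H).toAlgHom.comp
    ((Algebra.TensorProduct.map δ (AlgHom.id k H)).comp (Bialgebra.comulAlgHom k H))

lemma twistAlgHom_eq_convMul :
    (twistAlgHom δ).toLinearMap =
      (toConv (Algebra.linearMap k H ∘ₗ δ.toLinearMap) * toConv LinearMap.id).ofConv :=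
  LinearMap.lid_comp_map_comp_comul _ _

lemma twistedAntipode_eq_convMul :
    twistedAntipode δ =
      (toConv (Algebra.linearMap k H ∘ₗ δ.toLinearMap) * toConv (antipode k)).ofConv :=
  LinearMap.lid_comp_map_comp_comul _ _

lemma antipode_twistAlgHom (a : H) : antipode k (twistAlgHom δ a) = twistedAntipode δ a := by
  simp [twistAlgHom, twistedAntipode, ← (ℛ k a).eq]

lemma twistedAntipode_mul (a b : H) :
    twistedAntipode δ (a * b) = twistedAntipode δ b * twistedAntipode δ a := by
  simp only [← antipode_twistAlgHom, map_mul, antipode_mul_antidistrib]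

lemma twistAlgHom_convMul_antipode :
    toConv (twistAlgHom δ).toLinearMap * toConv (antipode k) =
      toConv (Algebra.linearMap k H ∘ₗ δ.toLinearMap) := by
  rw [twistAlgHom_eq_convMul, toConv_ofConv, mul_assoc, LinearMap.id_mul_antipode, mul_one]

lemma comul_comp_twistedAntipode :
    comul ∘ₗ twistedAntipode δ = map (antipode k) (twistedAntipode δ) ∘ₗ
      (TensorProduct.comm k H H).toLinearMap ∘ₗ comul := by
  set η : H →ₗ[k] H := Algebra.linearMap k H ∘ₗ δ.toLinearMap
  have hη : (Bialgebra.comulAlgHom k H).toLinearMap ∘ₗ η = includeRight.toLinearMap ∘ₗ η := by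
    simp only [η, LinearMap.algHom_comp_algebraLinearMap_comp]
  apply toConv_injective
  calc toConv (comul ∘ₗ twistedAntipode δ)
      = toConv ((Bialgebra.comulAlgHom k H).toLinearMap ∘ₗ η) *
          toConv (comul ∘ₗ antipode k) := by
        rw [twistedAntipode_eq_convMul]
        exact (LinearMap.algHom_comp_convMul (Bialgebra.comulAlgHom k H) _ _).symm
    _ = toConv (includeRight.toLinearMap ∘ₗ η) *
          toConv (includeRight.toLinearMap ∘ₗ antipode k) *
          toConv (includeLeft.toLinearMap ∘ₗ antipode k) := by
        rw [hη, comul_comp_antipode, ← LinearMap.includeRight_comp_convMul_includeLeft_comp,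
          mul_assoc]
    _ = _ := by
        rw [LinearMap.algHom_comp_convMul, ← twistedAntipode_eq_convMul,
          LinearMap.includeRight_comp_convMul_includeLeft_comp]

lemma comul_twistedAntipode (a : H) :
    comul (twistedAntipode δ a) =
      map (antipode k) (twistedAntipode δ) (TensorProduct.comm k H H (comul a)) := by
  simpa using LinearMap.congr_fun (comul_comp_twistedAntipode δ) a

lemma comul_twistedAntipode_antipode (a : H) :
    comul (twistedAntipode δ (antipode k a)) =
      map (antipode k ∘ₗ antipode k) (twistedAntipode δ ∘ₗ antipode k) (comul a) := by
  rw [comul_twistedAntipode, comul_antipode, ← (ℛ k a).eq]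
  simp [map_sum]

lemma comul_twistedAntipode_mul_tmul {ι : Type*} {a : H} (r : Repr k a ι) (x y : H) :
    comul (twistedAntipode δ a) * (x ⊗ₜ[k] y) =
      ∑ i ∈ r.index, (antipode k (r.right i) * x) ⊗ₜ[k] (twistedAntipode δ (r.left i) * y) := by
  rw [comul_twistedAntipode]
  simp [← r.eq, map_sum, Finset.sum_mul, Algebra.TensorProduct.tmul_mul_tmul]

lemma sum_twistAlgHom_mul_antipode_tmul {ι : Type*} {κ : ι → Type*} {a : H}
    (r : Repr k a ι) (w : ∀ i, Repr k (r.right i) (κ i)) :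
    ∑ i ∈ r.index, ∑ j ∈ (w i).index,
        (twistAlgHom δ (r.left i) * antipode k ((w i).left j)) ⊗ₜ[k] (w i).right j =
      1 ⊗ₜ[k] twistAlgHom δ a := by
  set η : H →ₗ[k] H := Algebra.linearMap k H ∘ₗ δ.toLinearMap
  have hη : includeLeft.toLinearMap ∘ₗ η = includeRight.toLinearMap ∘ₗ η := by
    simp only [η, LinearMap.algHom_comp_algebraLinearMap_comp]
  have h : toConv (includeLeft.toLinearMap ∘ₗ (twistAlgHom δ).toLinearMap) *
      (toConv (includeLeft.toLinearMap ∘ₗ antipode k) * toConv (includeRight.toLinearMap ∘ₗ .id)) =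
      toConv (includeRight.toLinearMap ∘ₗ (twistAlgHom δ).toLinearMap) := by
    rw [← mul_assoc, LinearMap.algHom_comp_convMul, twistAlgHom_convMul_antipode, ofConv_toConv,
      hη, LinearMap.algHom_comp_convMul, ← twistAlgHom_eq_convMul]
  simpa [r.convMul_apply, (w _).convMul_apply, Finset.mul_sum,
    Algebra.TensorProduct.tmul_mul_tmul] using congr(ofConv $h a)

lemma sum_comul_twistedAntipode_antipode_mul
    (hinv : ∀ h : H, twistedAntipode δ (twistedAntipode δ h) = h) {ι : Type*} {a : H}
    (r : Repr k a ι) :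
    ∑ i ∈ r.index, comul (twistedAntipode δ (antipode k (r.right i))) *
        (twistedAntipode δ (r.left i) ⊗ₜ[k] (1 : H)) = 1 ⊗ₜ[k] a := by
  calc _ = map (antipode k) (twistedAntipode δ ∘ₗ antipode k)
        (∑ i ∈ r.index, ∑ j ∈ (ℛ k (r.right i)).index,
          (twistAlgHom δ (r.left i) * antipode k ((ℛ k (r.right i)).left j)) ⊗ₜ[k]
            (ℛ k (r.right i)).right j) := by
        simp only [map_sum, map_tmul]
        refine Finset.sum_congr rfl fun i _ => ?_
        simp [comul_twistedAntipode_antipode, ← (ℛ k (r.right i)).eq, Finset.sum_mul,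
          Algebra.TensorProduct.tmul_mul_tmul, antipode_mul_antidistrib, antipode_twistAlgHom]
    _ = 1 ⊗ₜ[k] a := by
      rw [sum_twistAlgHom_mul_antipode_tmul, map_tmul, antipode_one, LinearMap.comp_apply,
        antipode_twistAlgHom, hinv]

lemma cyclicTau2_tmul (a b : H) :
    cyclicTau2 δ (a ⊗ₜ[k] b) = comul (twistedAntipode δ a) * (b ⊗ₜ[k] 1) :=
  rfl

lemma cyclicTau2_cyclicTau2_tmul (hinv : ∀ h : H, twistedAntipode δ (twistedAntipode δ h) = h)
    (a b : H) :
    cyclicTau2 δ (cyclicTau2 δ (a ⊗ₜ[k] b)) = comul (twistedAntipode δ b) * (1 ⊗ₜ[k] a) := by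
  rw [cyclicTau2_tmul, comul_twistedAntipode_mul_tmul δ (ℛ k a), map_sum]
  simp_rw [cyclicTau2_tmul, mul_one, twistedAntipode_mul, Bialgebra.comul_mul, mul_assoc,
    ← Finset.mul_sum, sum_comul_twistedAntipode_antipode_mul δ hinv]

end TwistedAntipode

/-- If `(δ, 1)` is a modular pair in involution, i.e. `S_δ² = id`, then the cyclic
operator `τ₂` satisfies `τ₂³ = id` on `H ⊗ H`. -/
theorem cyclicTau2_cube_eq_id {k H : Type*} [Field k] [Ring H] [HopfAlgebra k H]
    (δ : H →ₐ[k] k) (hinv : ∀ h : H, twistedAntipode δ (twistedAntipode δ h) = h) :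
    cyclicTau2 δ ∘ₗ cyclicTau2 δ ∘ₗ cyclicTau2 δ = LinearMap.id := by
  refine TensorProduct.ext' fun a b => ?_
  change cyclicTau2 δ (cyclicTau2 δ (cyclicTau2 δ (a ⊗ₜ[k] b))) = a ⊗ₜ[k] b
  rw [cyclicTau2_cyclicTau2_tmul δ hinv, comul_twistedAntipode_mul_tmul δ (ℛ k b), map_sum]
  simp_rw [mul_one, cyclicTau2_tmul]
  calc _ = (∑ i ∈ (ℛ k b).index, comul (twistedAntipode δ (antipode k ((ℛ k b).right i))) *
        (twistedAntipode δ ((ℛ k b).left i) ⊗ₜ[k] (1 : H))) * (a ⊗ₜ[k] 1) := by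
        simp_rw [Finset.sum_mul, mul_assoc, Algebra.TensorProduct.tmul_mul_tmul, one_mul]
    _ = a ⊗ₜ[k] b := by
        rw [sum_comul_twistedAntipode_antipode_mul δ hinv, Algebra.TensorProduct.tmul_mul_tmul,
          one_mul, mul_one]
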